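/- Let C be an [n,k]_q linear code with 1 ≤ s ≤ k-1. If D_s(C)/d_s(C) < (q^{s+1}-1)/(q^{s+1}-q), then C is an s-minimal code. -/

import Mathlib

open Module

variable {F : Type*} [Field F] [Fintype F]

/-- The support of a subspace `U ⊆ F^ι`: coordinates where some vector of `U` is nonzero. -/
def csupp {ι : Type*} (U : Submodule F (ι → F)) : Set ι :=
  {j | ∃ x ∈ U, x j ≠ 0}

/-- The support weight of a subspace of `F^ι`. -/
noncomputable def wt {ι : Type*} (U : Submodule F (ι → F)) : ℕ := (csupp U).ncard

/-- `U` is an `s`-minimal subcode of `C`. -/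
def IsMinimalSubcode {ι : Type*} (C U : Submodule F (ι → F)) (s : ℕ) : Prop :=
  U ≤ C ∧ Module.finrank F U = s ∧
    ∀ V : Submodule F (ι → F), V ≤ C → Module.finrank F V = s →
      csupp V ⊆ csupp U → V = U

/-- `C` is an `s`-minimal code. -/
def SMinimal {ι : Type*} (C : Submodule F (ι → F)) (s : ℕ) : Prop :=
  ∀ U : Submodule F (ι → F), U ≤ C → Module.finrank F U = s → IsMinimalSubcode C U s

/-- The `s`-th generalized Hamming weight of `C`. -/
noncomputable def dGHW {ι : Type*} (C : Submodule F (ι → F)) (s : ℕ) : ℕ :=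
  sInf {w | ∃ U : Submodule F (ι → F), U ≤ C ∧ Module.finrank F U = s ∧ wt U = w}

/-- The `s`-th maximum support weight of `C`. -/
noncomputable def DGHW {ι : Type*} (C : Submodule F (ι → F)) (s : ℕ) : ℕ :=
  sSup {w | ∃ U : Submodule F (ι → F), U ≤ C ∧ Module.finrank F U = s ∧ wt U = w}

lemma csupp_mono {ι : Type*} {U V : Submodule F (ι → F)} (h : U ≤ V) :
    csupp U ⊆ csupp V := fun _ ⟨x, hx, hxj⟩ => ⟨x, h hx, hxj⟩

lemma exists_smul_of_ker_le_ker {M : Type*} [AddCommGroup M] [Module F M]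
    (f g : M →ₗ[F] F) (hf : f ≠ 0) (h : LinearMap.ker f ≤ LinearMap.ker g) :
    ∃ c : F, g = c • f := by
  obtain ⟨x, hx⟩ : ∃ x, f x ≠ 0 := by
    by_contra hc
    push_neg at hc
    exact hf (LinearMap.ext fun y => by simpa using hc y)
  refine ⟨g x / f x, LinearMap.ext fun y => ?_⟩
  have hmem : y - (f y / f x) • x ∈ LinearMap.ker f := by
    simp [LinearMap.mem_ker, div_mul_cancel₀, hx]
  have := h hmem
  simp only [LinearMap.mem_ker, map_sub, map_smul, smul_eq_mul, sub_eq_zero] at this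
  rw [LinearMap.smul_apply, smul_eq_mul, this]
  field_simp

/-- Key counting lemma: for a subcode `W` of dimension `s+1`,
`(q^(s+1) - 1) * d_s(C) ≤ (q^(s+1) - q) * wt W`. -/
lemma key_count {n s q : ℕ} (hq : Fintype.card F = q)
    (C W : Submodule F (Fin n → F)) (hWC : W ≤ C) (hW : Module.finrank F W = s + 1) :
    (q ^ (s + 1) - 1) * dGHW C s ≤ (q ^ (s + 1) - q) * wt W := by
  classical
  have hq1 : 1 ≤ q := hq ▸ Fintype.card_pos
  have hqpow : q ≤ q ^ (s + 1) := by
    calc q = q ^ 1 := (pow_one q).symm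
    _ ≤ q ^ (s + 1) := Nat.pow_le_pow_right hq1 (by omega)
  let b : Basis (Fin (s + 1)) F W := Module.finBasisOfFinrankEq F W hW
  let φ : (Fin (s + 1) → F) → (W →ₗ[F] F) := fun a => ∑ i, a i • b.coord i
  have hφapp : ∀ a j, φ a (b j) = a j := by
    intro a j
    simp only [φ, LinearMap.sum_apply, LinearMap.smul_apply, Basis.coord_apply,
      Basis.repr_self, smul_eq_mul]
    rw [Finset.sum_eq_single j]
    · simp
    · intro i _ hij; simp [Finsupp.single_apply, Ne.symm hij]
    · simp
  have hφ0 : ∀ a : Fin (s + 1) → F, a ≠ 0 → φ a ≠ 0 := by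
    intro a ha hc
    apply ha
    funext i
    have := hφapp a i
    rw [hc] at this
    simpa using this.symm
  have hφsmul : ∀ (c : F) (a : Fin (s + 1) → F), φ (c • a) = c • φ a := by
    intro c a
    apply b.ext
    intro j
    simp [hφapp]
  let K : (Fin (s + 1) → F) → Submodule F (Fin n → F) :=
    fun a => (LinearMap.ker (φ a)).map W.subtype
  have hKle : ∀ a, K a ≤ W := fun a => Submodule.map_subtype_le _ _
  have hKrank : ∀ a : Fin (s + 1) → F, a ≠ 0 → Module.finrank F (K a) = s := by
    intro a ha
    have h1 : Module.finrank F (K a) = Module.finrank F (LinearMap.ker (φ a)) :=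
      Submodule.finrank_map_subtype_eq _ _
    have h2 := LinearMap.finrank_range_add_finrank_ker (φ a)
    have hrange : Module.finrank F (LinearMap.range (φ a)) = 1 := by
      have hub : Module.finrank F (LinearMap.range (φ a)) ≤ 1 := by
        have := Submodule.finrank_le (LinearMap.range (φ a))
        simpa using this
      have hne : Module.finrank F (LinearMap.range (φ a)) ≠ 0 := by
        rw [Ne, Submodule.finrank_eq_zero, LinearMap.range_eq_bot]
        exact hφ0 a ha
      omega
    rw [hrange, hW] at h2
    omega
  have hdle : ∀ a : Fin (s + 1) → F, a ≠ 0 → dGHW C s ≤ wt (K a) := by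
    intro a ha
    exact Nat.sInf_le ⟨K a, (hKle a).trans hWC, hKrank a ha, rfl⟩
  -- finset versions of supports
  let SW : Finset (Fin n) := (Set.toFinite (csupp W)).toFinset
  have hSWcard : SW.card = wt W := (Set.ncard_eq_toFinset_card _ _).symm
  have hwtK : ∀ a : Fin (s + 1) → F,
      wt (K a) = (SW.filter (fun j => j ∈ csupp (K a))).card := by
    intro a
    rw [wt, Set.ncard_eq_toFinset_card _ (Set.toFinite _)]
    congr 1
    ext j
    simp only [Set.Finite.mem_toFinset, Finset.mem_filter, SW]
    exact ⟨fun hj => ⟨csupp_mono (hKle a) hj, hj⟩, fun hj => hj.2⟩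
  let A : Finset (Fin (s + 1) → F) := Finset.univ.filter (· ≠ 0)
  have hAcard : A.card = q ^ (s + 1) - 1 := by
    have : A = Finset.univ.erase 0 := by
      ext a; simp [A, Finset.mem_erase]
    rw [this, Finset.card_erase_of_mem (Finset.mem_univ _), Finset.card_univ]
    congr 1
    rw [Fintype.card_fun, hq, Fintype.card_fin]
  -- the per-coordinate count
  have hcount : ∀ j ∈ SW,
      (A.filter (fun a => j ∈ csupp (K a))).card = q ^ (s + 1) - q := by
    intro j hj
    have hjW : j ∈ csupp W := by simpa [SW] using hj
    -- the functional "evaluate at j"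
    let ψ : W →ₗ[F] F := (LinearMap.proj j).comp W.subtype
    have hψ : ψ ≠ 0 := by
      obtain ⟨x, hxW, hxj⟩ := hjW
      intro hc
      have : ψ ⟨x, hxW⟩ = 0 := by rw [hc]; rfl
      exact hxj this
    let aj : Fin (s + 1) → F := fun i => ψ (b i)
    have hφaj : φ aj = ψ := b.ext fun i => by rw [hφapp]
    have haj : aj ≠ 0 := by
      intro hc
      apply hψ
      rw [← hφaj, hc]
      apply b.ext
      intro i
      simp [hφapp]
    -- membership characterization : j ∉ csupp (K a) ↔ ker (φ a) ≤ ker ψ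
    have hmem : ∀ a : Fin (s + 1) → F,
        (j ∉ csupp (K a)) ↔ LinearMap.ker (φ a) ≤ LinearMap.ker ψ := by
      intro a
      constructor
      · intro hna x hx
        rw [LinearMap.mem_ker]
        by_contra hne
        exact hna ⟨(x : Fin n → F), ⟨x, hx, rfl⟩, hne⟩
      · rintro hle ⟨x, ⟨y, hy, rfl⟩, hxj⟩
        exact hxj (hle hy)
    -- bad set has cardinality q - 1
    have hbad : (A.filter (fun a => j ∉ csupp (K a))).card = q - 1 := by
      have himage : A.filter (fun a => j ∉ csupp (K a)) =
          (Finset.univ.filter (fun c : F => c ≠ 0)).image (fun c => c • aj) := by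
        ext a
        simp only [Finset.mem_filter, Finset.mem_image, Finset.mem_univ, true_and, A]
        constructor
        · rintro ⟨ha, hna⟩
          rw [hmem] at hna
          obtain ⟨c, hc⟩ := exists_smul_of_ker_le_ker (φ a) ψ (hφ0 a ha) hna
          have hc0 : c ≠ 0 := by
            intro h0; apply hψ; rw [hc, h0, zero_smul]
          refine ⟨c⁻¹, inv_ne_zero hc0, ?_⟩
          have : aj = c • a := by
            funext i
            have : ψ (b i) = c * φ a (b i) := by rw [hc]; rfl
            rw [hφapp] at this
            simpa [aj] using this
          rw [this, smul_smul, inv_mul_cancel₀ hc0, one_smul]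
        · rintro ⟨c, hc0, rfl⟩
          refine ⟨fun h0 => haj (by simpa [smul_eq_zero, hc0] using h0), ?_⟩
          rw [hmem, hφsmul, hφaj]
          intro x hx
          rw [LinearMap.mem_ker] at hx ⊢
          simpa [hc0] using hx
      rw [himage, Finset.card_image_of_injOn]
      · have : (Finset.univ.filter (fun c : F => c ≠ 0)) = Finset.univ.erase 0 := by
          ext c; simp [Finset.mem_erase]
        rw [this, Finset.card_erase_of_mem (Finset.mem_univ _), Finset.card_univ, hq]
      · intro c _ c' _ hcc
        by_contra hne
        apply haj
        dsimp only at hcc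
        have : (c - c') • aj = 0 := by rw [sub_smul, hcc, sub_self]
        rcases smul_eq_zero.mp this with h | h
        · exact absurd (sub_eq_zero.mp h) hne
        · exact absurd h (fun h => haj h)
    have hsplit := Finset.card_filter_add_card_filter_not
      (s := A) (p := fun a => j ∈ csupp (K a))
    have hbad' : (A.filter (fun a => ¬ (j ∈ csupp (K a)))).card = q - 1 := by
      rw [← hbad]
    rw [hbad', hAcard] at hsplit
    omega
  -- double counting
  have hsum : ∑ a ∈ A, wt (K a) = wt W * (q ^ (s + 1) - q) := by
    calc ∑ a ∈ A, wt (K a)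
        = ∑ a ∈ A, ∑ j ∈ SW, (if j ∈ csupp (K a) then 1 else 0) := by
          refine Finset.sum_congr rfl fun a _ => ?_
          rw [hwtK a, Finset.card_filter]
      _ = ∑ j ∈ SW, ∑ a ∈ A, (if j ∈ csupp (K a) then 1 else 0) := Finset.sum_comm
      _ = ∑ j ∈ SW, (q ^ (s + 1) - q) := by
          refine Finset.sum_congr rfl fun j hj => ?_
          rw [← Finset.card_filter, hcount j hj]
      _ = wt W * (q ^ (s + 1) - q) := by rw [Finset.sum_const, hSWcard, smul_eq_mul]
  have hlower : (q ^ (s + 1) - 1) * dGHW C s ≤ ∑ a ∈ A, wt (K a) := by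
    calc (q ^ (s + 1) - 1) * dGHW C s = ∑ _a ∈ A, dGHW C s := by
          rw [Finset.sum_const, hAcard, smul_eq_mul]
      _ ≤ ∑ a ∈ A, wt (K a) := by
          refine Finset.sum_le_sum fun a ha => ?_
          exact hdle a (by simpa [A] using ha)
  rw [hsum] at hlower
  exact hlower.trans_eq (mul_comm _ _)

/-- if `D_s(C)/d_s(C) < (q^{s+1}-1)/(q^{s+1}-q)` then `C` is an
`s`-minimal code. -/
theorem sMinimal_of_ratio_lt (n k s q : ℕ) (hq : Fintype.card F = q)
    (hs1 : 1 ≤ s) (hs2 : s ≤ k - 1)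
    (C : Submodule F (Fin n → F)) (hC : Module.finrank F C = k)
    (h : (DGHW C s : ℝ) / (dGHW C s : ℝ) < ((q : ℝ) ^ (s + 1) - 1) / ((q : ℝ) ^ (s + 1) - q)) :
    SMinimal C s := by
  classical
  have hq1 : 1 ≤ q := hq ▸ Fintype.card_pos
  have hq2 : 2 ≤ q := hq ▸ Fintype.one_lt_card
  intro U hUC hU
  refine ⟨hUC, hU, ?_⟩
  intro V hVC hV hsupp
  by_contra hne
  have hnle : ¬ V ≤ U := by
    intro hle
    exact hne (Submodule.eq_of_le_of_finrank_eq hle (by rw [hV, hU]))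
  obtain ⟨v, hvV, hvU⟩ := SetLike.not_le_iff_exists.mp hnle
  have hv0 : v ≠ 0 := fun h0 => hvU (h0 ▸ U.zero_mem)
  clear hnle hne
  set W := U ⊔ Submodule.span F {v} with hWdef
  have hWC : W ≤ C := sup_le hUC ((Submodule.span_singleton_le_iff_mem v C).mpr (hVC hvV))
  have hinf : U ⊓ Submodule.span F {v} = ⊥ := by
    rw [Submodule.eq_bot_iff]
    rintro x ⟨hxU, hxs⟩
    obtain ⟨c, rfl⟩ := Submodule.mem_span_singleton.mp hxs
    rcases eq_or_ne c 0 with h0 | h0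
    · simp [h0]
    · exfalso
      have := U.smul_mem c⁻¹ hxU
      rw [smul_smul, inv_mul_cancel₀ h0, one_smul] at this
      exact hvU this
  have hWrank : Module.finrank F W = s + 1 := by
    have hadd := Submodule.finrank_sup_add_finrank_inf_eq U (Submodule.span F {v})
    rw [hinf, finrank_bot, finrank_span_singleton hv0, hU] at hadd
    rw [hWdef]
    omega
  have hWU : csupp W ⊆ csupp U := by
    rintro j ⟨x, hxW, hxj⟩
    obtain ⟨y, hy, z, hz, rfl⟩ := Submodule.mem_sup.mp hxW
    by_cases hyj : y j ≠ 0
    · exact ⟨y, hy, hyj⟩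
    · push_neg at hyj
      have hzV : z ∈ V := by
        have : Submodule.span F {v} ≤ V := (Submodule.span_singleton_le_iff_mem v V).mpr hvV
        exact this hz
      have hzj : z j ≠ 0 := by
        intro h0
        apply hxj
        simp [Pi.add_apply, hyj, h0]
      exact hsupp ⟨z, hzV, hzj⟩
  have hwt_le_n : ∀ U' : Submodule F (Fin n → F), wt U' ≤ n := by
    intro U'
    have := Set.ncard_le_ncard (Set.subset_univ (csupp U')) Set.finite_univ
    simpa [wt, Set.ncard_univ] using this
  have hbdd : BddAbove {w | ∃ U' : Submodule F (Fin n → F),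
      U' ≤ C ∧ Module.finrank F U' = s ∧ wt U' = w} := by
    refine ⟨n, fun w hw => ?_⟩
    obtain ⟨U', _, _, hw'⟩ := hw
    exact hw' ▸ hwt_le_n U'
  have hUD : wt U ≤ DGHW C s := le_csSup hbdd ⟨U, hUC, hU, rfl⟩
  have hWwt : wt W ≤ wt U := Set.ncard_le_ncard hWU (Set.toFinite _)
  have hdpos : 0 < dGHW C s := by
    rcases Nat.eq_zero_or_pos (dGHW C s) with h0 | h0
    · exfalso
      rcases Nat.sInf_eq_zero.mp h0 with hmem | hempty
      · obtain ⟨U', hU'C, hU'r, hU'w⟩ := hmem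
        have hcs : csupp U' = ∅ := (Set.ncard_eq_zero (Set.toFinite _)).mp hU'w
        have : U' = ⊥ := by
          rw [Submodule.eq_bot_iff]
          intro x hx
          funext j
          by_contra hxj
          have hjmem : j ∈ csupp U' := ⟨x, hx, hxj⟩
          rw [hcs] at hjmem
          exact Set.notMem_empty j hjmem
        rw [this, finrank_bot] at hU'r
        omega
      · exact absurd hempty (Set.nonempty_iff_ne_empty.mp ⟨wt U, U, hUC, hU, rfl⟩)
    · exact h0
  have hkey := key_count hq C W hWC hWrank
  have hkey2 : (q ^ (s + 1) - 1) * dGHW C s ≤ (q ^ (s + 1) - q) * DGHW C s :=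
    hkey.trans (Nat.mul_le_mul_left _ (hWwt.trans hUD))
  -- numeric contradiction
  have hqlt : q < q ^ (s + 1) := by
    have h2 : q ^ 2 ≤ q ^ (s + 1) := Nat.pow_le_pow_right hq1 (by omega)
    have h3 : q * 2 ≤ q * q := Nat.mul_le_mul_left q hq2
    have h4 : q * q = q ^ 2 := (sq q).symm
    omega
  have h1lt : 1 ≤ q ^ (s + 1) := by omega
  have hcast1 : ((q ^ (s + 1) - 1 : ℕ) : ℝ) = (q : ℝ) ^ (s + 1) - 1 := by
    push_cast [Nat.cast_sub h1lt]
    ring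
  have hcast2 : ((q ^ (s + 1) - q : ℕ) : ℝ) = (q : ℝ) ^ (s + 1) - q := by
    push_cast [Nat.cast_sub hqlt.le]
    ring
  have hkeyR : ((q : ℝ) ^ (s + 1) - 1) * (dGHW C s : ℝ) ≤
      ((q : ℝ) ^ (s + 1) - q) * (DGHW C s : ℝ) := by
    have := (Nat.cast_le (α := ℝ)).mpr hkey2
    push_cast at this
    rw [hcast1, hcast2] at this
    exact this
  have hdR : (0 : ℝ) < (dGHW C s : ℝ) := by exact_mod_cast hdpos
  have hXq : (0 : ℝ) < (q : ℝ) ^ (s + 1) - q := by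
    have : (q : ℝ) < (q : ℝ) ^ (s + 1) := by exact_mod_cast hqlt
    linarith
  rw [div_lt_div_iff₀ hdR hXq] at h
  linarith
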